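/- arXiv:2512.12047 — 2 statements merged into one kernel-verified Lean document; each statement's English description precedes it below -/
import Mathlib

section
/- Let G be a connected graph of diameter 3 with vertices x, w such that d(x,w)=3, and suppose that for every vertex z of G the families of lines {line(z,y) : d(z,y)=2} and {line(z,y) : d(z,y)=3} are disjoint. Define B(x,w) = {u ∈ N(x) ∩ N^2(w) : line(w,u) = line(x,v) for some v ∈ N^2(x)} and B(w,x) symmetrically. Then the map f : B(x,w) → B(w,x) sending u to the unique v ∈ N^2(x) with line(w,u) = line(x,v) is a well-defined bijection. -/
def graphLine {V : Type*} (G : SimpleGraph V) (x y : V) : Set V :=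
  {x, y} ∪ {z | G.dist z y = G.dist z x + G.dist x y ∨
    G.dist x y = G.dist x z + G.dist z y ∨
    G.dist x z = G.dist x y + G.dist y z}

lemma line_mem_left {V : Type*} (G : SimpleGraph V) (x y : V) : x ∈ graphLine G x y := by
  simp [graphLine]

lemma line_mem_right {V : Type*} (G : SimpleGraph V) (x y : V) : y ∈ graphLine G x y := by
  simp [graphLine]

lemma line_uniq {V : Type*} (G : SimpleGraph V) (hconn : G.Connected)
    (hdiam : ∀ a b : V, G.dist a b ≤ 3) (a v v' : V)
    (hv : G.dist a v = 2) (hv' : G.dist a v' = 2)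
    (h : graphLine G a v = graphLine G a v') : v = v' := by
  have hm : v ∈ graphLine G a v' := h ▸ line_mem_right G a v
  simp only [graphLine, Set.mem_union, Set.mem_insert_iff, Set.mem_singleton_iff,
    Set.mem_setOf_eq] at hm
  have hz : ∀ p q : V, G.dist p q = 0 → p = q := by
    intro p q hpq
    rcases (SimpleGraph.dist_eq_zero_iff_eq_or_not_reachable).1 hpq with h | h
    · exact h
    · exact absurd (hconn p q) h
  rcases hm with (rfl | rfl) | h1 | h1 | h1
  · simp [SimpleGraph.dist_self] at hv
  · rfl
  · rw [SimpleGraph.dist_comm (u := v) (v := a)] at h1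
    have h2 := hdiam v v'
    omega
  · exact hz v v' (by omega)
  · exact (hz v' v (by omega)).symm

lemma line_key {V : Type*} (G : SimpleGraph V) (hdiam : ∀ a b : V, G.dist a b ≤ 3)
    (a b v : V) (hab : G.dist a b = 3) (hv : G.dist a v = 2)
    (hmem : b ∈ graphLine G a v) : G.dist b v = 1 := by
  simp only [graphLine, Set.mem_union, Set.mem_insert_iff, Set.mem_singleton_iff,
    Set.mem_setOf_eq] at hmem
  rcases hmem with (rfl | rfl) | h1 | h1 | h1
  · simp [SimpleGraph.dist_self] at hab
  · rw [hv] at hab; omega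
  · rw [SimpleGraph.dist_comm (u := b) (v := a), hab, hv] at h1
    have h2 := hdiam b v
    omega
  · rw [hab, hv] at h1; omega
  · rw [hab, hv, SimpleGraph.dist_comm (u := v) (v := b)] at h1; omega

theorem stmt_13 {V : Type*} (G : SimpleGraph V) (hconn : G.Connected)
    (hdiam : ∀ a b : V, G.dist a b ≤ 3)
    (x w : V) (hxw : G.dist x w = 3)
    (hnorep : ∀ z y y' : V, G.dist z y = 2 → G.dist z y' = 3 →
      graphLine G z y ≠ graphLine G z y')
    (Bxw : Set V) (hBxw : Bxw = {u | G.dist x u = 1 ∧ G.dist w u = 2 ∧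
      ∃ v, G.dist x v = 2 ∧ graphLine G w u = graphLine G x v})
    (Bwx : Set V) (hBwx : Bwx = {u | G.dist w u = 1 ∧ G.dist x u = 2 ∧
      ∃ v, G.dist w v = 2 ∧ graphLine G x u = graphLine G w v}) :
    ∃ f : V → V, Set.BijOn f Bxw Bwx ∧
      (∀ u ∈ Bxw, G.dist x (f u) = 2 ∧ graphLine G w u = graphLine G x (f u)) ∧
      (∀ u ∈ Bxw, ∀ v, G.dist x v = 2 → graphLine G w u = graphLine G x v → v = f u) := by
  classical
  have hwx : G.dist w x = 3 := by rw [SimpleGraph.dist_comm (u := w) (v := x)]; exact hxw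
  set f : V → V := fun u =>
    if h : ∃ v, G.dist x v = 2 ∧ graphLine G w u = graphLine G x v then h.choose else u with hf
  have hspec : ∀ u ∈ Bxw, G.dist x (f u) = 2 ∧ graphLine G w u = graphLine G x (f u) := by
    intro u hu
    rw [hBxw] at hu
    obtain ⟨-, -, hex⟩ := hu
    have : f u = hex.choose := by simp only [hf, dif_pos hex]
    rw [this]
    exact hex.choose_spec
  have huniq : ∀ u ∈ Bxw, ∀ v, G.dist x v = 2 → graphLine G w u = graphLine G x v → v = f u := by
    intro u hu v hv hline
    obtain ⟨h1, h2⟩ := hspec u hu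
    exact line_uniq G hconn hdiam x v (f u) hv h1 (hline ▸ h2)
  have hmaps : Set.MapsTo f Bxw Bwx := by
    intro u hu
    obtain ⟨h1, h2⟩ := hspec u hu
    have hwmem : w ∈ graphLine G x (f u) := h2 ▸ line_mem_left G w u
    have hd1 : G.dist w (f u) = 1 := line_key G hdiam x w (f u) hxw h1 hwmem
    rw [hBxw] at hu
    rw [hBwx]
    exact ⟨hd1, h1, u, hu.2.1, h2.symm⟩
  have hinj : Set.InjOn f Bxw := by
    intro u hu u' hu' heq
    obtain ⟨h1, h2⟩ := hspec u hu
    obtain ⟨h1', h2'⟩ := hspec u' hu'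
    have : graphLine G w u = graphLine G w u' := by rw [h2, h2', heq]
    rw [hBxw] at hu hu'
    exact line_uniq G hconn hdiam w u u' hu.2.1 hu'.2.1 this
  have hsurj : Set.SurjOn f Bxw Bwx := by
    intro b hb
    rw [hBwx] at hb
    obtain ⟨hb1, hb2, v', hv'2, hline⟩ := hb
    have hxmem : x ∈ graphLine G w v' := hline ▸ line_mem_left G x b
    have hd1 : G.dist x v' = 1 := line_key G hdiam w x v' hwx hv'2 hxmem
    have hv'B : v' ∈ Bxw := by
      rw [hBxw]
      exact ⟨hd1, hv'2, b, hb2, hline.symm⟩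
    have : b = f v' := huniq v' hv'B b hb2 hline.symm
    exact ⟨v', hv'B, this.symm⟩
  exact ⟨f, ⟨hmaps, hinj, hsurj⟩, hspec, huniq⟩
end

section
/- Let G be a connected graph of diameter 3 with vertices x, w such that d(x,w)=3, and assume for every vertex z the families {line(z,y) : d(z,y)=2} and {line(z,y) : d(z,y)=3} are disjoint. Let B(x,w) = {u ∈ N(x) ∩ N^2(w) : line(w,u) ∈ {line(x,v) : v ∈ N^2(x)}} and C(x,w) = N(x) ∩ N^3(w). Then there are no edges between B(x,w) and C(x,w). -/
lemma mem_graphLine_iff {V : Type*} (G : SimpleGraph V) (a b z : V) :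
    z ∈ graphLine G a b ↔ z = a ∨ z = b ∨ G.dist z b = G.dist z a + G.dist a b ∨
      G.dist a b = G.dist a z + G.dist z b ∨ G.dist a z = G.dist a b + G.dist b z := by
  simp [graphLine, or_assoc]

lemma exists_mid {V : Type*} (G : SimpleGraph V) {x v : V} (pw : G.Walk x v)
    (h : pw.length = 2) : ∃ p, G.Adj x p ∧ G.Adj p v := by
  cases pw with
  | nil => simp at h
  | cons ha q =>
    cases q with
    | nil => simp at h
    | cons hb q' =>
      cases q' with
      | nil => exact ⟨_, ha, hb⟩
      | cons _ _ => simp [SimpleGraph.Walk.length_cons] at h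

theorem stmt_17 {V : Type*} (G : SimpleGraph V) (hconn : G.Connected)
    (hdiam : ∀ a b : V, G.dist a b ≤ 3)
    (x w : V) (hxw : G.dist x w = 3)
    (hnorep : ∀ z y y' : V, G.dist z y = 2 → G.dist z y' = 3 →
      graphLine G z y ≠ graphLine G z y')
    (B C : Set V)
    (hB : B = {u | G.dist x u = 1 ∧ G.dist w u = 2 ∧
      ∃ v, G.dist x v = 2 ∧ graphLine G w u = graphLine G x v})
    (hC : C = {u | G.dist x u = 1 ∧ G.dist w u = 3}) :
    ∀ u ∈ B, ∀ u' ∈ C, ¬ G.Adj u u' := by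
  subst hB hC
  intro u hu u' hu' hadj
  obtain ⟨hxu, hwu, v, hxv, hL⟩ := hu
  obtain ⟨hxu', hwu'⟩ := hu'
  have hwx : G.dist w x = 3 := by rw [SimpleGraph.dist_comm]; exact hxw
  have huu' : G.dist u u' = 1 := SimpleGraph.dist_eq_one_iff_adj.mpr hadj
  -- d(w,v) = 1
  have hwv : G.dist w v = 1 := by
    have hw_mem : w ∈ graphLine G x v := by
      rw [← hL]; exact Or.inl (Or.inl rfl)
    rcases (mem_graphLine_iff G x v w).1 hw_mem with h | h | h | h | h
    · rw [h, SimpleGraph.dist_self] at hxw; omega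
    · rw [h, hxv] at hxw; omega
    · rw [hwx, hxv] at h; have := hdiam w v; omega
    · rw [hxv, hxw] at h; omega
    · rw [hxw, hxv] at h
      rw [SimpleGraph.dist_comm (u := w) (v := v)]; omega
  -- d(u',v) = 3
  have hu'v : G.dist u' v = 3 := by
    have hmem : u' ∈ graphLine G x v := by
      rw [← hL]
      refine (mem_graphLine_iff G w u u').2 (Or.inr (Or.inr (Or.inr (Or.inr ?_))))
      rw [hwu', hwu, huu']
    rcases (mem_graphLine_iff G x v u').1 hmem with h | h | h | h | h
    · rw [h, SimpleGraph.dist_self] at hxu'; omega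
    · rw [h, hxv] at hxu'; omega
    · rw [SimpleGraph.dist_comm (u := u') (v := x), hxu', hxv] at h; exact h
    · rw [hxv, hxu'] at h
      have ht : G.dist w u' ≤ G.dist w v + G.dist v u' := hconn.dist_triangle
      rw [hwu', hwv, SimpleGraph.dist_comm (u := v) (v := u')] at ht; omega
    · rw [SimpleGraph.dist_comm (u := v) (v := u'), hxu', hxv] at h; omega
  -- d(u,v) = 3
  have huv : G.dist u v = 3 := by
    have hmem : u ∈ graphLine G x v := by
      rw [← hL]; exact Or.inl (Or.inr rfl)
    rcases (mem_graphLine_iff G x v u).1 hmem with h | h | h | h | h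
    · rw [h, SimpleGraph.dist_self] at hxu; omega
    · rw [h, hxv] at hxu; omega
    · rw [SimpleGraph.dist_comm (u := u) (v := x), hxu, hxv] at h; exact h
    · rw [hxv, hxu] at h
      have ht : G.dist u' v ≤ G.dist u' u + G.dist u v := hconn.dist_triangle
      rw [hu'v, SimpleGraph.dist_comm (u := u') (v := u), huu'] at ht; omega
    · rw [SimpleGraph.dist_comm (u := v) (v := u), hxu, hxv] at h; omega
  -- midpoint p of a geodesic from x to v
  obtain ⟨pw, hpw⟩ := hconn.exists_walk_length_eq_dist x v
  rw [hxv] at hpw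
  obtain ⟨p, hxp, hpv⟩ := exists_mid G pw hpw
  have hdxp : G.dist x p = 1 := SimpleGraph.dist_eq_one_iff_adj.mpr hxp
  have hdpv : G.dist p v = 1 := SimpleGraph.dist_eq_one_iff_adj.mpr hpv
  -- d(w,p) = 2
  have hwp : G.dist w p = 2 := by
    have h1 : G.dist w p ≤ G.dist w v + G.dist v p := hconn.dist_triangle
    have h2 : G.dist x w ≤ G.dist x p + G.dist p w := hconn.dist_triangle
    rw [hwv, SimpleGraph.dist_comm (u := v) (v := p), hdpv] at h1
    rw [hxw, hdxp, SimpleGraph.dist_comm (u := p) (v := w)] at h2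
    omega
  have hpu : p ≠ u := by
    intro h; rw [h, huv] at hdpv; omega
  -- p is in line(x,v) hence in line(w,u): contradiction
  have hp_mem : p ∈ graphLine G w u := by
    rw [hL]
    refine (mem_graphLine_iff G x v p).2 (Or.inr (Or.inr (Or.inr (Or.inl ?_))))
    rw [hxv, hdxp, hdpv]
  rcases (mem_graphLine_iff G w u p).1 hp_mem with h | h | h | h | h
  · rw [h, SimpleGraph.dist_self] at hwp; omega
  · exact hpu h
  · rw [SimpleGraph.dist_comm (u := p) (v := w), hwp, hwu] at h
    have := hdiam p u; omega
  · rw [hwu, hwp] at h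
    exact hpu (hconn.dist_eq_zero_iff.1 (by omega))
  · rw [hwp, hwu] at h
    exact hpu (hconn.dist_eq_zero_iff.1 (by omega)).symm
end
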